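/- (Undamped D-LinOSS recovers LinOSS-IMEX.) For all real A ≥ 0 and Δt ∈ (0,1] with Δt²·A ≤ 4, the set of complex roots of the characteristic polynomial of M(A, 0, Δt) (i.e., the D-LinOSS recurrent matrix with damping G = 0) is exactly {λ^IMEX+(A,Δt), λ^IMEX−(A,Δt)}. -/

import Mathlib

open Polynomial

/-- The D-LinOSS per-component recurrent matrix. -/
noncomputable def Mrec (A G Δt : ℝ) : Matrix (Fin 2) (Fin 2) ℝ :=
  !![1 / (1 + Δt * G), -(Δt * A) / (1 + Δt * G);
     Δt / (1 + Δt * G), 1 - (Δt ^ 2 * A) / (1 + Δt * G)]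

/-- The LinOSS-IMEX per-component eigenvalues (`s = 1` for `+`, `s = -1` for `−`). -/
noncomputable def lamIMEX (A Δt : ℝ) (s : ℝ) : ℂ :=
  (((2 - Δt ^ 2 * A) / 2 : ℝ) : ℂ) +
    (s : ℂ) * (Complex.I / 2) * ((Real.sqrt (Δt ^ 2 * A * (4 - Δt ^ 2 * A)) : ℝ) : ℂ)

/-! At `G = 0` the recurrent matrix has determinant `1` and trace `2 - Δt²A`, so its
characteristic polynomial is `λ² - (2 - Δt²A) λ + 1`, whose discriminant
`-Δt²A (4 - Δt²A)` is nonpositive; the quadratic formula yields `λ^IMEX±`. -/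

open Complex

theorem Complex.setOf_sq_sub_mul_add_eq_zero {b c : ℝ} (h : b ^ 2 ≤ 4 * c) :
    {z : ℂ | z ^ 2 - b * z + c = 0} =
      {b / 2 + I / 2 * √(4 * c - b ^ 2), b / 2 - I / 2 * √(4 * c - b ^ 2)} := by
  have hsqrt : ((√(4 * c - b ^ 2) : ℝ) : ℂ) ^ 2 = 4 * c - b ^ 2 := by
    rw [← ofReal_pow, Real.sq_sqrt (by linarith)]
    push_cast
    ring
  have hdiscrim : discrim 1 (-b : ℂ) c = (I * √(4 * c - b ^ 2)) * (I * √(4 * c - b ^ 2)) := by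
    rw [discrim]
    linear_combination hsqrt - ((√(4 * c - b ^ 2) : ℂ) ^ 2) * I_sq
  ext z
  rw [Set.mem_ofPred_eq, show z ^ 2 - b * z + c = 1 * (z * z) + (-b) * z + c by ring,
    quadratic_eq_zero_iff one_ne_zero hdiscrim, Set.mem_insert_iff, Set.mem_singleton_iff]
  congr! 2 <;> ring

theorem det_Mrec (A G Δt : ℝ) : (Mrec A G Δt).det = 1 / (1 + Δt * G) := by
  rw [Matrix.det_fin_two, Mrec]
  simp only [Matrix.of_apply, Matrix.cons_val', Matrix.cons_val_zero, Matrix.cons_val_one,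
    Matrix.cons_val_fin_one]
  ring

theorem trace_Mrec (A G Δt : ℝ) :
    (Mrec A G Δt).trace = 1 + (1 - Δt ^ 2 * A) / (1 + Δt * G) := by
  rw [Matrix.trace_fin_two, Mrec]
  simp only [Matrix.of_apply, Matrix.cons_val', Matrix.cons_val_zero, Matrix.cons_val_one,
    Matrix.cons_val_fin_one]
  ring

theorem charpoly_Mrec_zero (A Δt : ℝ) :
    (Mrec A 0 Δt).charpoly = X ^ 2 - C (2 - Δt ^ 2 * A) * X + C 1 := by
  rw [Matrix.charpoly_fin_two, trace_Mrec, det_Mrec]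
  congr 4 <;> norm_num
  ring

theorem undamped_dlinoss_is_linoss_imex_general (A Δt : ℝ) (hA : 0 ≤ A)
    (hbound : Δt ^ 2 * A ≤ 4) :
    {lam : ℂ | Polynomial.aeval lam (Mrec A 0 Δt).charpoly = 0} =
      {lamIMEX A Δt 1, lamIMEX A Δt (-1)} := by
  have hdiscrim : (2 - Δt ^ 2 * A) ^ 2 ≤ 4 * 1 := by
    nlinarith [mul_nonneg (sq_nonneg Δt) hA]
  have hradicand : Δt ^ 2 * A * (4 - Δt ^ 2 * A) = 4 * 1 - (2 - Δt ^ 2 * A) ^ 2 := by ring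
  convert Complex.setOf_sq_sub_mul_add_eq_zero hdiscrim using 1
  · ext lam
    simp [charpoly_Mrec_zero]
  · simp only [lamIMEX, hradicand]
    push_cast
    ring_nf

theorem undamped_dlinoss_is_linoss_imex (A Δt : ℝ) (hA : 0 ≤ A)
    (hΔt : Δt ∈ Set.Ioc (0 : ℝ) 1) (hbound : Δt ^ 2 * A ≤ 4) :
    {lam : ℂ | Polynomial.aeval lam (Mrec A 0 Δt).charpoly = 0} =
      {lamIMEX A Δt 1, lamIMEX A Δt (-1)} :=
  undamped_dlinoss_is_linoss_imex_general A Δt hA hbound
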